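/- Assume the structure constants are nonnegative. Let z ∈ ℝ_+^n × ℝ_+^ν with z ≠ 0. If W^t(z) = 0 for some t ≥ 1, then there exists an integer t_0 with 0 ≤ t_0 < t such that W^{t_0}(z) ≠ 0 and W^{t_0}(z) ∈ O^{n,ν}. -/

import Mathlib

open Filter

/-- The gonosomic evolution operator `W` on `ℝ^n × ℝ^ν` associated with structure constants
`γ_{ipk}` and `γ̃_{ipr}`: it maps `((x_i), (y_p))` to `((x'_k), (y'_r))` with
`x'_k = Σ_{i,p} γ_{ipk} x_i y_p` and `y'_r = Σ_{i,p} γ̃_{ipr} x_i y_p`. -/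
noncomputable def W {n ν : ℕ} (γ : Fin n → Fin ν → Fin n → ℝ)
    (γ' : Fin n → Fin ν → Fin ν → ℝ)
    (z : (Fin n → ℝ) × (Fin ν → ℝ)) : (Fin n → ℝ) × (Fin ν → ℝ) :=
  (fun k => ∑ i, ∑ p, γ i p k * z.1 i * z.2 p,
   fun r => ∑ i, ∑ p, γ' i p r * z.1 i * z.2 p)

/-- The linear form `ϖ(z) = Σ_i x_i + Σ_p y_p` on `ℝ^n × ℝ^ν`. -/
noncomputable def piW {n ν : ℕ} (z : (Fin n → ℝ) × (Fin ν → ℝ)) : ℝ :=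
  ∑ i, z.1 i + ∑ p, z.2 p

/-- `γ_{ip} = Σ_k γ_{ipk}`. -/
noncomputable def gA {n ν : ℕ} (γ : Fin n → Fin ν → Fin n → ℝ)
    (i : Fin n) (p : Fin ν) : ℝ := ∑ k, γ i p k

/-- `γ̃_{ip} = Σ_r γ̃_{ipr}`. -/
noncomputable def gB {n ν : ℕ} (γ' : Fin n → Fin ν → Fin ν → ℝ)
    (i : Fin n) (p : Fin ν) : ℝ := ∑ r, γ' i p r

/-- `σ_{ip} = γ_{ip} + γ̃_{ip}`. -/
noncomputable def σc {n ν : ℕ} (γ : Fin n → Fin ν → Fin n → ℝ)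
    (γ' : Fin n → Fin ν → Fin ν → ℝ) (i : Fin n) (p : Fin ν) : ℝ :=
  gA γ i p + gB γ' i p

/-- The set `O^{n,ν}` of nonnegative points `((x_i),(y_p))` with `x_i y_p = 0` for every
pair `(i,p)` with `σ_{ip} ≠ 0`. -/
def Oset {n ν : ℕ} (γ : Fin n → Fin ν → Fin n → ℝ)
    (γ' : Fin n → Fin ν → Fin ν → ℝ) : Set ((Fin n → ℝ) × (Fin ν → ℝ)) :=
  {z | (∀ i, 0 ≤ z.1 i) ∧ (∀ p, 0 ≤ z.2 p) ∧
    ∀ i p, σc γ γ' i p ≠ 0 → z.1 i * z.2 p = 0}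

/-- The set `S^{n,ν} = S^{n+ν-1} \ O^{n,ν}`, where `S^{n+ν-1}` is the simplex of nonnegative
points with `ϖ(z) = 1`. -/
def Sset {n ν : ℕ} (γ : Fin n → Fin ν → Fin n → ℝ)
    (γ' : Fin n → Fin ν → Fin ν → ℝ) : Set ((Fin n → ℝ) × (Fin ν → ℝ)) :=
  {z | (∀ i, 0 ≤ z.1 i) ∧ (∀ p, 0 ≤ z.2 p) ∧ piW z = 1} \ Oset γ γ'

/-- The normalized gonosomic operator `V(z) = (1/ϖ(W z)) • W z` (junk value when
`ϖ(W z) = 0`, since in `ℝ` we have `0⁻¹ = 0`). -/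
noncomputable def V {n ν : ℕ} (γ : Fin n → Fin ν → Fin n → ℝ)
    (γ' : Fin n → Fin ν → Fin ν → ℝ)
    (z : (Fin n → ℝ) × (Fin ν → ℝ)) : (Fin n → ℝ) × (Fin ν → ℝ) :=
  (piW (W γ γ' z))⁻¹ • W γ γ' z

/-! Since `ϖ(W z) = Σ σ_{ip} x_i y_p` is a sum of nonnegative terms, a nonnegative point with
`W z = 0` lies in `O^{n,ν}`. Nonnegativity is preserved by `W`, so the last nonzero iterate
before `W^t z = 0` is the required `W^{t₀} z`. -/

section Gonosomic

variable {n ν : ℕ} (γ : Fin n → Fin ν → Fin n → ℝ) (γ' : Fin n → Fin ν → Fin ν → ℝ)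

theorem Function.exists_lt_iterate_ne_and_iterate_succ_eq {α : Type*} (f : α → α) {a b : α}
    (hab : a ≠ b) {t : ℕ} (ht : f^[t] a = b) :
    ∃ s < t, f^[s] a ≠ b ∧ f^[s + 1] a = b := by
  induction t with
  | zero => exact absurd ht hab
  | succ t ih =>
    by_cases hprev : f^[t] a = b
    · obtain ⟨s, hst, hs⟩ := ih hprev
      exact ⟨s, hst.trans t.lt_succ_self, hs⟩
    · exact ⟨t, t.lt_succ_self, hprev, ht⟩

theorem piW_W (z : (Fin n → ℝ) × (Fin ν → ℝ)) :
    piW (W γ γ' z) = ∑ i, ∑ p, σc γ γ' i p * z.1 i * z.2 p := by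
  simp only [piW, W, σc, gA, gB, add_mul, Finset.sum_mul, Finset.sum_add_distrib]
  congr 1 <;> exact Finset.sum_comm.trans (Finset.sum_congr rfl fun _ _ => Finset.sum_comm)

section Nonneg

variable {γ γ'} (hγ : ∀ i p k, 0 ≤ γ i p k) (hγ' : ∀ i p r, 0 ≤ γ' i p r)
include hγ hγ'

theorem σc_nonneg (i : Fin n) (p : Fin ν) : 0 ≤ σc γ γ' i p :=
  add_nonneg (Finset.sum_nonneg fun k _ => hγ i p k) (Finset.sum_nonneg fun r _ => hγ' i p r)

theorem W_nonneg {z : (Fin n → ℝ) × (Fin ν → ℝ)} (hz1 : ∀ i, 0 ≤ z.1 i) (hz2 : ∀ p, 0 ≤ z.2 p) :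
    (∀ k, 0 ≤ (W γ γ' z).1 k) ∧ (∀ r, 0 ≤ (W γ γ' z).2 r) := by
  simp only [W]
  exact ⟨fun k => Finset.sum_nonneg fun i _ => Finset.sum_nonneg fun p _ =>
        mul_nonneg (mul_nonneg (hγ i p k) (hz1 i)) (hz2 p),
      fun r => Finset.sum_nonneg fun i _ => Finset.sum_nonneg fun p _ =>
        mul_nonneg (mul_nonneg (hγ' i p r) (hz1 i)) (hz2 p)⟩

theorem iterate_W_nonneg {z : (Fin n → ℝ) × (Fin ν → ℝ)} (hz1 : ∀ i, 0 ≤ z.1 i)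
    (hz2 : ∀ p, 0 ≤ z.2 p) (m : ℕ) :
    (∀ i, 0 ≤ ((W γ γ')^[m] z).1 i) ∧ (∀ p, 0 ≤ ((W γ γ')^[m] z).2 p) := by
  induction m with
  | zero => exact ⟨hz1, hz2⟩
  | succ m ih =>
    rw [Function.iterate_succ_apply']
    exact W_nonneg hγ hγ' ih.1 ih.2

theorem mem_Oset_of_W_eq_zero {z : (Fin n → ℝ) × (Fin ν → ℝ)} (hz1 : ∀ i, 0 ≤ z.1 i)
    (hz2 : ∀ p, 0 ≤ z.2 p) (hWz : W γ γ' z = 0) : z ∈ Oset γ γ' := by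
  refine ⟨hz1, hz2, fun i p hσ => ?_⟩
  have hterm_nonneg : ∀ i p, 0 ≤ σc γ γ' i p * z.1 i * z.2 p := fun i p =>
    mul_nonneg (mul_nonneg (σc_nonneg hγ hγ' i p) (hz1 i)) (hz2 p)
  have hsum : ∑ i, ∑ p, σc γ γ' i p * z.1 i * z.2 p = 0 := by
    rw [← piW_W, hWz]
    simp [piW]
  have hterm : σc γ γ' i p * z.1 i * z.2 p = 0 :=
    (Finset.sum_eq_zero_iff_of_nonneg fun p _ => hterm_nonneg i p).mp
      ((Finset.sum_eq_zero_iff_of_nonneg fun i _ =>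
        Finset.sum_nonneg fun p _ => hterm_nonneg i p).mp hsum i (Finset.mem_univ i))
      p (Finset.mem_univ p)
  rw [mul_assoc] at hterm
  exact (mul_eq_zero.mp hterm).resolve_left hσ

end Nonneg

end Gonosomic

theorem stmt_15_general {n ν : ℕ}
    (γ : Fin n → Fin ν → Fin n → ℝ) (γ' : Fin n → Fin ν → Fin ν → ℝ)
    (hγ : ∀ i p k, 0 ≤ γ i p k) (hγ' : ∀ i p r, 0 ≤ γ' i p r)
    (z : (Fin n → ℝ) × (Fin ν → ℝ)) (hz1 : ∀ i, 0 ≤ z.1 i) (hz2 : ∀ p, 0 ≤ z.2 p)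
    (hz0 : z ≠ 0)
    (t : ℕ) (hWt : (W γ γ')^[t] z = 0) :
    ∃ t₀ : ℕ, t₀ < t ∧ (W γ γ')^[t₀] z ≠ 0 ∧ (W γ γ')^[t₀] z ∈ Oset γ γ' := by
  obtain ⟨t₀, ht₀, hne, hsucc⟩ :=
    Function.exists_lt_iterate_ne_and_iterate_succ_eq (W γ γ') hz0 hWt
  obtain ⟨h1, h2⟩ := iterate_W_nonneg hγ hγ' hz1 hz2 t₀
  rw [Function.iterate_succ_apply'] at hsucc
  exact ⟨t₀, ht₀, hne, mem_Oset_of_W_eq_zero hγ hγ' h1 h2 hsucc⟩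

/-- Suppose the structure constants are nonnegative and let `z` be
nonnegative with `z ≠ 0`.  If `W^t(z) = 0` for some `t ≥ 1`, then there exists `t₀` with
`0 ≤ t₀ < t` such that `W^{t₀}(z) ≠ 0` and `W^{t₀}(z) ∈ O^{n,ν}`. -/
theorem stmt_15 {n ν : ℕ} (hn : 1 ≤ n) (hν : 1 ≤ ν)
    (γ : Fin n → Fin ν → Fin n → ℝ) (γ' : Fin n → Fin ν → Fin ν → ℝ)
    (hγ : ∀ i p k, 0 ≤ γ i p k) (hγ' : ∀ i p r, 0 ≤ γ' i p r)
    (z : (Fin n → ℝ) × (Fin ν → ℝ)) (hz1 : ∀ i, 0 ≤ z.1 i) (hz2 : ∀ p, 0 ≤ z.2 p)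
    (hz0 : z ≠ 0)
    (t : ℕ) (ht : 1 ≤ t) (hWt : (W γ γ')^[t] z = 0) :
    ∃ t₀ : ℕ, t₀ < t ∧ (W γ γ')^[t₀] z ≠ 0 ∧ (W γ γ')^[t₀] z ∈ Oset γ γ' :=
  stmt_15_general γ γ' hγ hγ' z hz1 hz2 hz0 t hWt
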